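/- arXiv:2109.11396 — 3 statements merged into one kernel-verified Lean document; each statement's English description precedes it below -/
import Mathlib

section
/- For integers m, r with 0 ≤ r < m, if ∑_{i=0}^{r} C(m,i) ≥ C(m,r+1), then ∑_{i=0}^{r} C(m-1,i) > C(m-1,r+1). -/
/-!
Write `m = n + 1` and `S k = ∑_{i ≤ k} C(n, i)`. Pascal's rule turns the hypothesis into
`C(n, r) + C(n, r + 1) ≤ S r + S (r - 1)`. If the conclusion failed, i.e. `S r ≤ C(n, r + 1)`,
this would give both `C(n, r) ≤ S (r - 1)` and `2 C(n, r) ≤ C(n, r + 1)`. The latter forces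
`n ≥ 3r + 2`, so the binomial coefficients at least double up to index `r`, and then the
geometric bound `S (r - 1) < C(n, r)` contradicts the former.
-/

open Finset

namespace Nat

theorem sum_range_succ_choose_succ (n r : ℕ) :
    ∑ i ∈ range (r + 1), (n + 1).choose i =
      ∑ i ∈ range (r + 1), n.choose i + ∑ i ∈ range r, n.choose i := by
  induction r with
  | zero => simp
  | succ r ih =>
    rw [sum_range_succ, ih, choose_succ_succ, sum_range_succ _ (r + 1), sum_range_succ _ r]
    ring

theorem two_mul_choose_le_choose_succ_iff {n i : ℕ} (hi : i ≤ n) :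
    2 * n.choose i ≤ n.choose (i + 1) ↔ 3 * i + 2 ≤ n := by
  have hpos : 0 < n.choose i := choose_pos hi
  calc 2 * n.choose i ≤ n.choose (i + 1)
      ↔ 2 * n.choose i * (i + 1) ≤ n.choose (i + 1) * (i + 1) :=
        (Nat.mul_le_mul_right_iff i.succ_pos).symm
    _ ↔ n.choose i * (2 * (i + 1)) ≤ n.choose i * (n - i) := by
        rw [choose_succ_right_eq, mul_comm 2, mul_assoc]
    _ ↔ 3 * i + 2 ≤ n := by
        rw [Nat.mul_le_mul_left_iff hpos]
        omega

end Nat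

theorem Finset.sum_range_lt_of_two_mul_le {R : Type*} [Semiring R] [PartialOrder R]
    [IsOrderedCancelAddMonoid R] {f : ℕ → R} {r : ℕ} (h₀ : 0 < f 0)
    (h : ∀ i < r, 2 * f i ≤ f (i + 1)) : ∑ i ∈ range r, f i < f r := by
  induction r with
  | zero => simpa using h₀
  | succ r ih =>
    calc ∑ i ∈ range (r + 1), f i = ∑ i ∈ range r, f i + f r := sum_range_succ f r
      _ < f r + f r := add_lt_add_left (ih fun i hi => h i (by omega)) _
      _ = 2 * f r := (two_mul _).symm
      _ ≤ f (r + 1) := h r r.lt_succ_self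

theorem stmt_2_general (m r : ℕ)
    (hge : m.choose (r + 1) ≤ ∑ i ∈ Finset.range (r + 1), m.choose i) :
    (m - 1).choose (r + 1) < ∑ i ∈ Finset.range (r + 1), (m - 1).choose i := by
  obtain _ | n := m
  · simp [sum_range_succ']
  rw [Nat.add_sub_cancel]
  by_contra! hcon
  have hr : r + 1 ≤ n :=
    Nat.choose_ne_zero_iff.1 (hcon.trans_lt' (by simp [sum_range_succ'])).ne'
  rw [Nat.sum_range_succ_choose_succ, Nat.choose_succ_succ', sum_range_succ] at hge
  rw [sum_range_succ] at hcon
  have hdouble : 2 * n.choose r ≤ n.choose (r + 1) := by omega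
  have hn : 3 * r + 2 ≤ n := (Nat.two_mul_choose_le_choose_succ_iff (by omega)).1 hdouble
  have hgeom : ∑ i ∈ range r, n.choose i < n.choose r :=
    sum_range_lt_of_two_mul_le (by simp) fun i hi =>
      (Nat.two_mul_choose_le_choose_succ_iff (by omega)).2 (by omega)
  omega

theorem stmt_2 (m r : ℕ) (h : r < m)
    (hge : m.choose (r + 1) ≤ ∑ i ∈ Finset.range (r + 1), m.choose i) :
    (m - 1).choose (r + 1) < ∑ i ∈ Finset.range (r + 1), (m - 1).choose i :=
  stmt_2_general m r hge
end

section
/- For every integer t ≥ 6, ∑_{i=0}^{t} C(3t, i) < C(3t, t+1). -/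
/-!
For `N = 3t` the ratio `C(N, i+1) / C(N, i) = (N - i) / (i + 1)` is at least `2` for `i < t`, so the
terms with `i < t - 3` sum to less than `C(N, t-3)`. The remaining comparison
`2 C(N, t-3) + C(N, t-2) + C(N, t-1) + C(N, t) ≤ C(N, t+1)` becomes, after dividing by `C(N, t-3)`,
an inequality between rational functions of `t`, with slack `(t-6)(3t+1) / ((t-2)(t-1)t)`.
-/

open Finset

theorem Finset.sum_range_add_le_of_add_le_succ {M : Type*} [AddCommMonoid M] [PartialOrder M]
    [IsOrderedAddMonoid M] {f : ℕ → M} {m : ℕ} (h : ∀ i < m, f i + f i ≤ f (i + 1)) :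
    ∑ i ∈ range m, f i + f 0 ≤ f m := by
  induction m with
  | zero => simp
  | succ m ih =>
    calc ∑ i ∈ range (m + 1), f i + f 0 = (∑ i ∈ range m, f i + f 0) + f m := by
          rw [sum_range_succ, add_right_comm]
      _ ≤ f m + f m := add_le_add_left (ih fun i hi => h i (by omega)) _
      _ ≤ f (m + 1) := h m (by omega)

namespace Nat

theorem two_mul_choose_le_choose_succ {n i : ℕ} (h : 3 * i + 2 ≤ n) :
    2 * n.choose i ≤ n.choose (i + 1) := by
  refine Nat.le_of_mul_le_mul_right (c := i + 1) ?_ i.succ_pos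
  calc 2 * n.choose i * (i + 1) = n.choose i * (2 * (i + 1)) := by ring
    _ ≤ n.choose i * (n - i) := Nat.mul_le_mul_left _ (by omega)
    _ = n.choose (i + 1) * (i + 1) := (choose_succ_right_eq n i).symm

theorem cast_choose_succ_right {n k : ℕ} (h : k ≤ n) :
    (n.choose (k + 1) : ℚ) = n.choose k * ((n - k) / (k + 1)) := by
  rw [mul_div_assoc', eq_div_iff (by positivity), ← Nat.cast_sub h]
  exact_mod_cast choose_succ_right_eq n k

theorem cast_choose_sub_two_mul_choose_add_choose_add_choose_add_choose (n : ℕ) :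
    ((3 * n + 18).choose (n + 7) : ℚ) - (2 * (3 * n + 18).choose (n + 3)
      + (3 * n + 18).choose (n + 4) + (3 * n + 18).choose (n + 5) + (3 * n + 18).choose (n + 6))
      = (3 * n + 18).choose (n + 3) * (n * (3 * n + 19) / ((n + 4) * (n + 5) * (n + 6))) := by
  have step (k : ℕ) (hk : k ≤ 3 * n + 18) := cast_choose_succ_right hk
  rw [step (n + 6) (by omega), step (n + 5) (by omega), step (n + 4) (by omega),
    step (n + 3) (by omega)]
  push_cast
  generalize ((3 * n + 18).choose (n + 3) : ℚ) = c
  field_simp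
  ring

theorem two_mul_choose_add_choose_add_choose_add_choose_le (n : ℕ) :
    2 * (3 * n + 18).choose (n + 3) + (3 * n + 18).choose (n + 4)
      + (3 * n + 18).choose (n + 5) + (3 * n + 18).choose (n + 6)
      ≤ (3 * n + 18).choose (n + 7) := by
  rw [← Nat.cast_le (α := ℚ), ← sub_nonneg]
  push_cast
  rw [cast_choose_sub_two_mul_choose_add_choose_add_choose_add_choose]
  positivity

end Nat

theorem stmt_7 (t : ℕ) (ht : 6 ≤ t) :
    (∑ i ∈ Finset.range (t + 1), (3 * t).choose i) < (3 * t).choose (t + 1) := by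
  obtain ⟨n, rfl⟩ : ∃ n, t = n + 6 := ⟨t - 6, by omega⟩
  rw [show 3 * (n + 6) = 3 * n + 18 by ring, show n + 6 + 1 = n + 7 from rfl]
  simp only [sum_range_succ (n := n + 6), sum_range_succ (n := n + 5),
    sum_range_succ (n := n + 4), sum_range_succ (n := n + 3)]
  have head := sum_range_add_le_of_add_le_succ (f := (3 * n + 18).choose) (m := n + 3)
    fun i hi => (two_mul _).symm.trans_le (Nat.two_mul_choose_le_choose_succ (by omega))
  have tail := Nat.two_mul_choose_add_choose_add_choose_add_choose_le n
  rw [Nat.choose_zero_right] at head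
  omega
end

section
/- For every integer m ∉ {0, 1, 3, 6, 9, 12}, setting r_0 = ⌊m/3⌋+1 and k = 3r_0 − m (so k ∈ {1,2,3}), we have 2^{-⌊m/3⌋} (1 − (k+2)/(2(r_0+1))) C(m, r_0) < f_m(r_0) < 2^{-⌊m/3⌋} C(m, r_0). -/
/-!
Write `S = ∑_{i ≤ r} C(m, i)`, `B = C(m, r)` and `n = m + 1`. Summing
`(m + 1) (C(m, j + 1) - 2 C(m, j)) = (m - 3j - 2) C(n, j + 1)` over `j < r` telescopes to
`(m + 1) (2B - 1 - S) = D := ∑_{j < r} (m - 3j - 2) C(n, j + 1)`, so both bounds are statements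
about `D`. For `r = ⌊m/3⌋ + 1` only the last few weights `m - 3j - 2` are negative, and they are
absorbed by their predecessors, so `D ≥ 0` and `S < 2B` (`m = 15` is checked directly).
For the lower bound, below the top index `p = r - 1` the ratios `C(n, j - 1) / C(n, j)` are at
most `p / (m - p + 2)`, so the positive part of `D` is dominated by an arithmetico-geometric
series in `C(n, p)`; with `C(n, p) ≥ (p + 1)²` what remains is a polynomial inequality in `p`.
-/

open Finset

theorem cast_choose_succ_mul (n j : ℕ) :
    (n.choose (j + 1) : ℝ) * (j + 1) = n.choose j * (n - j) := by
  have h₁ : ((n + 1).choose (j + 1) : ℝ) * (j + 1) = (n + 1) * n.choose j := by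
    exact_mod_cast (Nat.add_one_mul_choose_eq n j).symm
  have h₂ : ((n + 1).choose (j + 1) : ℝ) = n.choose j + n.choose (j + 1) := by
    exact_mod_cast Nat.choose_succ_succ n j
  linear_combination h₁ - (j + 1 : ℝ) * h₂

theorem add_one_mul_choose_succ_sub_two_mul (m j : ℕ) :
    ((m : ℝ) + 1) * (m.choose (j + 1) - 2 * m.choose j) =
      (m - 3 * j - 2) * (m + 1).choose (j + 1) := by
  have h₁ : ((m + 1).choose (j + 1) : ℝ) * (j + 1) = (m + 1) * m.choose j := by
    exact_mod_cast (Nat.add_one_mul_choose_eq m j).symm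
  have h₂ : ((m + 1).choose (j + 1) : ℝ) = m.choose j + m.choose (j + 1) := by
    exact_mod_cast Nat.choose_succ_succ m j
  linear_combination (3 : ℝ) * h₁ - (m + 1 : ℝ) * h₂

noncomputable def chooseDefect (m r : ℕ) : ℝ :=
  ∑ i ∈ range r, ((m : ℝ) - 3 * i - 2) * (m + 1).choose (i + 1)

theorem chooseDefect_succ (m r : ℕ) :
    chooseDefect m (r + 1) = chooseDefect m r + ((m : ℝ) - 3 * r - 2) * (m + 1).choose (r + 1) :=
  sum_range_succ _ _

theorem add_one_mul_two_choose_sub_sum_range (m r : ℕ) :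
    ((m : ℝ) + 1) * (2 * m.choose r - 1 - ∑ i ∈ range (r + 1), (m.choose i : ℝ)) =
      chooseDefect m r := by
  induction r with
  | zero => norm_num [chooseDefect]
  | succ r ih =>
    rw [chooseDefect_succ, ← ih, sum_range_succ _ (r + 1)]
    linear_combination add_one_mul_choose_succ_sub_two_mul m r

theorem sum_range_choose_lt_two_mul_choose_of_chooseDefect_nonneg {m r : ℕ}
    (h : 0 ≤ chooseDefect m r) :
    ∑ i ∈ range (r + 1), (m.choose i : ℝ) < 2 * m.choose r := by
  rw [← add_one_mul_two_choose_sub_sum_range, mul_nonneg_iff_of_pos_left (by positivity)] at h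
  linarith

theorem chooseDefect_nonneg_of_three_mul_le {m r : ℕ} (h : 3 * r ≤ m + 1) :
    0 ≤ chooseDefect m r := by
  refine sum_nonneg fun i hi => mul_nonneg ?_ (Nat.cast_nonneg _)
  have : (3 * i + 2 : ℝ) ≤ m := by exact_mod_cast (by grind : 3 * i + 2 ≤ m)
  linarith

theorem chooseDefect_nonneg_of_add_two {m r : ℕ} (h : m + 2 = 3 * r) (hr : 2 ≤ r) :
    0 ≤ chooseDefect m r := by
  obtain ⟨s, rfl⟩ : ∃ s, r = s + 2 := ⟨r - 2, by omega⟩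
  obtain rfl : m = 3 * s + 4 := by omega
  rw [chooseDefect_succ, chooseDefect_succ]
  have hrec := cast_choose_succ_mul (3 * s + 4 + 1) (s + 1)
  have hD := chooseDefect_nonneg_of_three_mul_le (m := 3 * s + 4) (r := s) (by omega)
  have hcancel :
      ((3 * s + 4 + 1).choose (s + 1 + 1) : ℝ) = 2 * (3 * s + 4 + 1).choose (s + 1) := by
    apply mul_right_cancel₀ (b := (s : ℝ) + 2) (by positivity)
    push_cast at hrec ⊢
    linear_combination hrec
  push_cast
  linear_combination hD + hcancel

theorem chooseDefect_nonneg_of_add_three {m r : ℕ} (h : m + 3 = 3 * r) (hr : 7 ≤ r) :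
    0 ≤ chooseDefect m r := by
  obtain ⟨s, rfl⟩ : ∃ s, r = s + 4 := ⟨r - 4, by omega⟩
  obtain rfl : m = 3 * s + 9 := by omega
  have hD := chooseDefect_nonneg_of_three_mul_le (m := 3 * s + 9) (r := s) (by omega)
  have hrec (j : ℕ) : ((3 * s + 10).choose (j + 1) : ℝ) * (j + 1) =
      (3 * s + 10).choose j * (3 * s + 10 - j) := by
    simpa using cast_choose_succ_mul (3 * s + 10) j
  have e₁ := hrec (s + 1)
  have e₂ := hrec (s + 2)
  have e₃ := hrec (s + 3)
  rw [chooseDefect_succ, chooseDefect_succ, chooseDefect_succ, chooseDefect_succ]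
  simp only [add_assoc, Nat.reduceAdd] at e₁ e₂ e₃ ⊢
  push_cast at e₁ e₂ e₃ ⊢
  set C₁ : ℝ := (((3 * s + 10).choose (s + 1) : ℕ) : ℝ)
  set C₂ : ℝ := (((3 * s + 10).choose (s + 2) : ℕ) : ℝ)
  set C₃ : ℝ := (((3 * s + 10).choose (s + 3) : ℕ) : ℝ)
  set C₄ : ℝ := (((3 * s + 10).choose (s + 4) : ℕ) : ℝ)
  have hlast : (7 * C₁ + 4 * C₂ + C₃ - 2 * C₄) * ((s + 2) * (s + 3) * (s + 4)) =
      C₁ * ((s - 3) * (3 * s ^ 2 + 22 * s + 40)) := by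
    linear_combination (4 * (s + 3) * (s + 4) - (3 * s + 10) * (2 * s + 8) : ℝ) * e₁
      - ((s + 2) * (3 * s + 10) : ℝ) * e₂ - (2 * (s + 2) * (s + 3) : ℝ) * e₃
  have hs : (3 : ℝ) ≤ s := by exact_mod_cast (by omega : 3 ≤ s)
  have hlast_nonneg : 0 ≤ 7 * C₁ + 4 * C₂ + C₃ - 2 * C₄ := by
    rw [← mul_nonneg_iff_of_pos_right (by positivity : (0 : ℝ) < (s + 2) * (s + 3) * (s + 4)),
      hlast]
    exact mul_nonneg (by positivity) (mul_nonneg (by linarith) (by positivity))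
  linear_combination hD + hlast_nonneg

theorem sum_range_choose_lt_two_mul_choose {m : ℕ} (hm : m ∉ ({0, 1, 3, 6, 9, 12} : Set ℕ)) :
    ∑ i ∈ range (m / 3 + 2), (m.choose i : ℝ) < 2 * m.choose (m / 3 + 1) := by
  simp only [Set.mem_insert_iff, Set.mem_singleton_iff, not_or] at hm
  by_cases h15 : m = 15
  · subst h15
    exact_mod_cast (by decide : ∑ i ∈ range 7, Nat.choose 15 i < 2 * Nat.choose 15 6)
  apply sum_range_choose_lt_two_mul_choose_of_chooseDefect_nonneg
  obtain h | ⟨h, hr⟩ | ⟨h, hr⟩ : 3 * (m / 3 + 1) ≤ m + 1 ∨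
      (m + 2 = 3 * (m / 3 + 1) ∧ 2 ≤ m / 3 + 1) ∨
      (m + 3 = 3 * (m / 3 + 1) ∧ 7 ≤ m / 3 + 1) := by
    omega
  · exact chooseDefect_nonneg_of_three_mul_le h
  · exact chooseDefect_nonneg_of_add_two h hr
  · exact chooseDefect_nonneg_of_add_three h hr

theorem sum_range_mul_le_of_ratio {c : ℕ → ℝ} {q w d : ℝ} (N : ℕ)
    (hq₀ : 0 ≤ q) (hq₁ : q < 1) (hw : 0 ≤ w) (hd : 0 ≤ d) (hc₀ : 0 ≤ c 0)
    (hc : ∀ t, t + 1 < N → c (t + 1) ≤ q * c t) :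
    ∑ t ∈ range N, (w + d * t) * c t ≤ (w / (1 - q) + d * q / (1 - q) ^ 2) * c 0 := by
  have hpow : ∀ t < N, c t ≤ q ^ t * c 0 := by
    intro t
    induction t with
    | zero => simp
    | succ t ih =>
      intro ht
      calc c (t + 1) ≤ q * c t := hc t ht
        _ ≤ q * (q ^ t * c 0) := mul_le_mul_of_nonneg_left (ih (by omega)) hq₀
        _ = q ^ (t + 1) * c 0 := by ring
  have hseries :
      HasSum (fun t : ℕ => (w + d * t) * q ^ t) (w / (1 - q) + d * q / (1 - q) ^ 2) := by
    have hgeom := (hasSum_geometric_of_lt_one hq₀ hq₁).mul_left w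
    have harith := (hasSum_coe_mul_geometric_of_norm_lt_one
      (by rwa [Real.norm_of_nonneg hq₀])).mul_left d
    have hval : w * (1 - q)⁻¹ + d * (q / (1 - q) ^ 2) = w / (1 - q) + d * q / (1 - q) ^ 2 := by
      ring
    exact hval ▸ (hgeom.add harith).congr_fun fun t => by ring
  calc ∑ t ∈ range N, (w + d * t) * c t
      ≤ ∑ t ∈ range N, (w + d * t) * q ^ t * c 0 := by
        refine sum_le_sum fun t ht => ?_
        rw [mul_assoc]
        exact mul_le_mul_of_nonneg_left (hpow t (mem_range.1 ht)) (by positivity)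
    _ = (∑ t ∈ range N, (w + d * t) * q ^ t) * c 0 := by rw [sum_mul]
    _ ≤ _ := mul_le_mul_of_nonneg_right
        (sum_le_hasSum _ (fun t _ => by positivity) hseries) hc₀

theorem choose_le_mul_choose_succ {n j p : ℕ} (hjp : j + 1 ≤ p) (hpn : p ≤ n) :
    (n.choose j : ℝ) ≤ p / (n - p + 1) * n.choose (j + 1) := by
  have hp : (p : ℝ) ≤ n := by exact_mod_cast hpn
  have hj : (j : ℝ) + 1 ≤ p := by exact_mod_cast hjp
  rw [div_mul_eq_mul_div, le_div_iff₀ (by linarith)]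
  calc (n.choose j : ℝ) * (n - p + 1) ≤ n.choose j * (n - j) := by gcongr; linarith
    _ = n.choose (j + 1) * (j + 1) := (cast_choose_succ_mul n j).symm
    _ ≤ p * n.choose (j + 1) := by rw [mul_comm]; gcongr

theorem sq_le_choose {n p : ℕ} (h : 3 * p + 1 ≤ n) : (p + 1) ^ 2 ≤ n.choose p := by
  induction p with
  | zero => simp
  | succ p ih =>
    have hrec := Nat.choose_succ_right_eq n p
    have hn : 2 * p + 4 ≤ n - p := by omega
    refine Nat.le_of_mul_le_mul_right ?_ (Nat.succ_pos p)
    nlinarith [Nat.mul_le_mul (ih (by omega)) hn]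

theorem chooseDefect_le {m p : ℕ} (h : 3 * p ≤ m + 1) :
    ((m : ℝ) - 2 * p + 2) ^ 2 * chooseDefect m p ≤
      ((m - 3 * p + 1) * (m - 2 * p + 2) + 3 * p) * (m - p + 2) * (m + 1).choose p := by
  have hm : (3 * p : ℝ) ≤ m + 1 := by exact_mod_cast h
  have hp : (0 : ℝ) ≤ p := by positivity
  have hA : (0 : ℝ) < m - 2 * p + 2 := by linarith
  have hB : (0 : ℝ) < m - p + 2 := by linarith
  set q : ℝ := p / (m - p + 2) with hq
  have hq₀ : 0 ≤ q := div_nonneg hp hB.le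
  have hq₁ : q < 1 := by rw [hq, div_lt_one hB]; linarith
  have hreflect : chooseDefect m p =
      ∑ t ∈ range p, ((m - 3 * p + 1 : ℝ) + 3 * t) * (m + 1).choose (p - t) := by
    rw [chooseDefect, ← sum_range_reflect]
    refine sum_congr rfl fun t ht => ?_
    have ht := mem_range.1 ht
    rw [show p - 1 - t + 1 = p - t by omega, Nat.cast_sub (by omega : t ≤ p - 1),
      Nat.cast_sub (by omega : 1 ≤ p)]
    push_cast
    ring
  have hratio (t : ℕ) (ht : t + 1 < p) :
      ((m + 1).choose (p - (t + 1)) : ℝ) ≤ q * (m + 1).choose (p - t) := by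
    have := choose_le_mul_choose_succ (n := m + 1) (j := p - (t + 1)) (p := p)
      (by omega) (by omega)
    rw [show p - (t + 1) + 1 = p - t by omega] at this
    push_cast at this
    convert this using 3
    ring
  have hgeom := sum_range_mul_le_of_ratio (c := fun t => ((m + 1).choose (p - t) : ℝ))
    (w := m - 3 * p + 1) (d := 3) p hq₀ hq₁ (by linarith) (by norm_num) (by positivity) hratio
  simp only [Nat.sub_zero] at hgeom
  have h1q : 1 - q = (m - 2 * p + 2) / (m - p + 2) := by
    rw [hq]; field_simp; ring
  rw [hreflect]
  calc _ ≤ ((m : ℝ) - 2 * p + 2) ^ 2 *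
        (((m - 3 * p + 1) / (1 - q) + 3 * q / (1 - q) ^ 2) * (m + 1).choose p) := by
        gcongr
    _ = _ := by
        rw [h1q, hq]
        field_simp

theorem lower_bound_polynomial_ineq {m p c : ℕ}
    (hm : m = 3 * p + 2 ∨ m = 3 * p + 1 ∨ (m = 3 * p ∧ 1 ≤ p)) (hc : (p + 1) ^ 2 ≤ c) :
    ((m : ℝ) + 6) * ((m + 1) * (p + 1) * (m - 2 * p + 2) ^ 2 +
        ((m - 3 * p - 2) * (m + 1 - p) * (m - 2 * p + 2) ^ 2 +
          (p + 1) * ((m - 3 * p + 1) * (m - 2 * p + 2) + 3 * p) * (m - p + 2)) * c) <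
      3 * (3 * p + 5 - m) * (m - p) * (m + 1 - p) * (m - 2 * p + 2) ^ 2 * c := by
  obtain ⟨u, rfl⟩ : ∃ u, c = (p + 1) ^ 2 + u := ⟨c - (p + 1) ^ 2, by omega⟩
  rw [← sub_pos]
  -- in each case every coefficient of the difference, as a polynomial in `p` (or `p - 1`) and `u`,
  -- is positive
  rcases hm with rfl | rfl | ⟨rfl, hp⟩
  · push_cast; ring_nf; positivity
  · push_cast; ring_nf; positivity
  · obtain ⟨v, rfl⟩ : ∃ v, p = v + 1 := ⟨p - 1, by omega⟩
    push_cast; ring_nf; positivity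

theorem mul_choose_lt_mul_sum_range_choose {m p : ℕ}
    (hm : m = 3 * p + 2 ∨ m = 3 * p + 1 ∨ (m = 3 * p ∧ 1 ≤ p)) :
    (5 * m - 9 * p - 3 : ℝ) * m.choose (p + 1) <
      (m + 6) * ∑ i ∈ range (p + 2), (m.choose i : ℝ) := by
  have hmp : 3 * p ≤ m := by omega
  have hm' : (3 * p : ℝ) ≤ m := by exact_mod_cast hmp
  have hid := add_one_mul_two_choose_sub_sum_range m (p + 1)
  rw [chooseDefect_succ] at hid
  have hE := chooseDefect_le (m := m) (p := p) (by omega)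
  have hB : (m.choose (p + 1) : ℝ) * (m + 1) = (m + 1).choose (p + 1) * (m - p) := by
    have := congrArg (Nat.cast : ℕ → ℝ) (Nat.choose_mul_succ_eq m (p + 1))
    rw [Nat.add_sub_add_right] at this
    push_cast [Nat.cast_sub (by omega : p ≤ m)] at this
    exact this
  have hc₀ := cast_choose_succ_mul (m + 1) p
  push_cast at hc₀
  have hpoly := lower_bound_polynomial_ineq hm (sq_le_choose (n := m + 1) (p := p) (by omega))
  set D : ℝ := chooseDefect m p
  set c₀ : ℝ := ((m + 1).choose (p + 1) : ℝ)
  have hM : (0 : ℝ) < (p + 1) * (m - 2 * p + 2) ^ 2 := by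
    have : (0 : ℝ) < m - 2 * p + 2 := by linarith
    positivity
  have key : ((m : ℝ) + 6) * (m + 1 + (m - 3 * p - 2) * c₀ + D) <
      3 * (3 * p + 5 - m) * (m - p) * c₀ := by
    refine lt_of_mul_lt_mul_right ?_ hM.le
    linear_combination hpoly + ((m : ℝ) + 6) * (p + 1) * hE
      - ((m : ℝ) - 2 * p + 2) ^ 2 * (3 * (3 * p + 5 - m) * (m - p) - (m + 6) * (m - 3 * p - 2))
        * hc₀
  refine lt_of_mul_lt_mul_left ?_ (by positivity : (0 : ℝ) ≤ m + 1)
  linear_combination key + ((m : ℝ) + 6) * hid - 3 * (3 * p + 5 - (m : ℝ)) * hB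

theorem stmt_18 (m : ℕ) (hne : m ∉ ({0, 1, 3, 6, 9, 12} : Set ℕ)) :
    (1 / 2 ^ (m / 3) : ℝ) *
        (1 - ((3 * (m / 3 + 1) - m : ℕ) + 2) / (2 * ((m / 3 + 1) + 1))) *
        (m.choose (m / 3 + 1))
      < (∑ i ∈ Finset.range (m / 3 + 2), (m.choose i : ℝ)) / 2 ^ (m / 3 + 1) ∧
    (∑ i ∈ Finset.range (m / 3 + 2), (m.choose i : ℝ)) / 2 ^ (m / 3 + 1)
      < (1 / 2 ^ (m / 3) : ℝ) * (m.choose (m / 3 + 1)) := by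
  -- the `m / 3` in `2 * ((m / 3 + 1) + 1)` is real division, so with `p = ⌊m/3⌋` the lower
  -- bound reads `(5m - 9p - 3) C(m, p + 1) < (m + 6) S`
  have hm0 : m ≠ 0 := by rintro rfl; simp at hne
  have hlower := mul_choose_lt_mul_sum_range_choose (m := m) (p := m / 3) (by omega)
  have hupper := sum_range_choose_lt_two_mul_choose hne
  have hk : ((3 * (m / 3 + 1) - m : ℕ) : ℝ) = 3 * (m / 3 : ℕ) + 3 - m := by
    rw [Nat.cast_sub (by omega)]; push_cast; ring
  rw [hk]
  set p := m / 3
  constructor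
  · rw [lt_div_iff₀ (by positivity)]
    calc _ = (5 * m - 9 * p - 3 : ℝ) * m.choose (p + 1) / (m + 6) := by
          field_simp
          ring
      _ < _ := by rw [div_lt_iff₀ (by positivity)]; linarith
  · rw [div_lt_iff₀ (by positivity)]
    calc _ < 2 * (m.choose (p + 1) : ℝ) := hupper
      _ = _ := by field_simp; ring
end
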